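/- arXiv:math/0511137 — 3 statements merged into one kernel-verified Lean document; each statement's English description precedes it below -/
import Mathlib

section
/- Let K be a positive definite map on a nonempty set X whose Kolmogorov representation (H_K, v_K) is such that {v_K(x) : x ∈ X} is a normalized tight frame for H_K (i.e., K is NTF). Then K ≤ δ, where δ : X × X → ℂ is the diagonal kernel δ(x,y) = 1 if x = y and 0 otherwise; that is, for all finite families x_1,…,x_n ∈ X and ξ_1,…,ξ_n ∈ ℂ, ∑_{i,j=1}^n K(x_i,x_j) ξ_i conj(ξ_j) ≤ ∑_{i,j=1}^n δ(x_i,x_j) ξ_i conj(ξ_j). -/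
open scoped InnerProductSpace ComplexOrder Classical
open Complex

noncomputable section

/-- A kernel `K : X × X → ℂ` is positive definite if every finite quadratic form
`∑ i j, K (x i) (x j) * ξ i * conj (ξ j)` is a nonnegative real number
(expressed via the partial order on `ℂ`). -/
def IsPosDefKernel {X : Type*} (K : X → X → ℂ) : Prop :=
  ∀ (n : ℕ) (x : Fin n → X) (ξ : Fin n → ℂ),
    0 ≤ ∑ i, ∑ j, K (x i) (x j) * ξ i * (starRingEnd ℂ) (ξ j)

/-- `(H, v)` is a Kolmogorov representation of the kernel `K`: the span of the range of `v`
is dense and inner products of the `v x` reproduce `K`.  Mathlib's inner product is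
conjugate-linear in the first variable, while the paper's is conjugate-linear in the second,
so the paper's `⟨v x, v y⟩ = K x y` reads `⟪v y, v x⟫_ℂ = K x y` here. -/
def IsKolmogorovRep {X : Type*} (K : X → X → ℂ) (H : Type*) [NormedAddCommGroup H]
    [InnerProductSpace ℂ H] (v : X → H) : Prop :=
  Dense (↑(Submodule.span ℂ (Set.range v)) : Set H) ∧
    ∀ x y : X, ⟪v y, v x⟫_ℂ = K x y

/-- `L² ≤ c K K'` in the sense of Dutkay. -/
def KernelSqLE {X : Type*} (L K K' : X → X → ℂ) (c : ℝ) : Prop :=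
  ∀ (m n : ℕ) (x : Fin m → X) (y : Fin n → X) (ξ : Fin m → ℂ) (η : Fin n → ℂ),
    ‖∑ i, ∑ j, L (x i) (y j) * ξ i * (starRingEnd ℂ) (η j)‖ ^ 2 ≤
      c * (∑ i, ∑ i', K (x i) (x i') * ξ i * (starRingEnd ℂ) (ξ i')).re *
        (∑ j, ∑ j', K' (y j) (y j') * η j * (starRingEnd ℂ) (η j')).re

/-- `K' ≤ c K` for kernels, via the partial order on `ℂ`. -/
def KernelLE {X : Type*} (K' K : X → X → ℂ) (c : ℝ) : Prop :=
  ∀ (n : ℕ) (x : Fin n → X) (ξ : Fin n → ℂ),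
    ∑ i, ∑ j, K' (x i) (x j) * ξ i * (starRingEnd ℂ) (ξ j) ≤
      (c : ℂ) * ∑ i, ∑ j, K (x i) (x j) * ξ i * (starRingEnd ℂ) (ξ j)

/-- A bounded operator is positive if `⟨S v, v⟩ ≥ 0` for all `v` (paper convention;
in Mathlib's convention this is `0 ≤ ⟪v, S v⟫`). -/
def IsPositiveOp {H : Type*} [NormedAddCommGroup H] [InnerProductSpace ℂ H]
    (S : H →L[ℂ] H) : Prop :=
  ∀ v : H, 0 ≤ ⟪v, S v⟫_ℂ

/-- A family of vectors is a normalized tight frame. -/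
def IsNormalizedTightFrame {H : Type*} [NormedAddCommGroup H] [InnerProductSpace ℂ H]
    {ι : Type*} (v : ι → H) : Prop :=
  ∀ f : H, ∑' i, ‖⟪v i, f⟫_ℂ‖ ^ 2 = ‖f‖ ^ 2

/-- `P` is the orthogonal projection onto the set `S`: idempotent, self-adjoint,
with range `S`. -/
def IsOrthProjectionOnto {H : Type*} [NormedAddCommGroup H] [InnerProductSpace ℂ H]
    (P : H →L[ℂ] H) (S : Set H) : Prop :=
  (∀ v, P (P v) = P v) ∧ (∀ v w : H, ⟪P v, w⟫_ℂ = ⟪v, P w⟫_ℂ) ∧ Set.range P = S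

/-- The two covariance relations for a Gabor-type kernel on `ℤ²`. -/
def GaborCovariant (lam : ℂ) (K : ℤ × ℤ → ℤ × ℤ → ℂ) : Prop :=
  (∀ m n m' n' : ℤ, K (m + 1, n) (m' + 1, n') = K (m, n) (m', n')) ∧
  (∀ m n m' n' : ℤ, K (m, n + 1) (m', n' + 1) = lam ^ (m - m') * K (m, n) (m', n'))

/-- The vectors `U^m V^n ξ₀` of a Gabor type unitary system. -/
def gaborVec {H : Type*} [NormedAddCommGroup H] [InnerProductSpace ℂ H] [CompleteSpace H]
    (U V : unitary (H →L[ℂ] H)) (ξ₀ : H) (p : ℤ × ℤ) : H :=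
  ((U ^ p.1 * V ^ p.2 : unitary (H →L[ℂ] H)) : H →L[ℂ] H) ξ₀

/-- `(H, U, V, ξ₀)` is the Gabor type cyclic system associated to the kernel `K` and the
unimodular scalar `lam` : `U V = lam V U`, the vectors `U^m V^n ξ₀` span a dense subspace,
and their inner products reproduce `K`. -/
def IsGaborSystem {H : Type*} [NormedAddCommGroup H] [InnerProductSpace ℂ H] [CompleteSpace H]
    (lam : ℂ) (K : ℤ × ℤ → ℤ × ℤ → ℂ) (U V : unitary (H →L[ℂ] H)) (ξ₀ : H) : Prop :=
  ((U : H →L[ℂ] H) * (V : H →L[ℂ] H) = lam • ((V : H →L[ℂ] H) * (U : H →L[ℂ] H))) ∧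
  Dense (↑(Submodule.span ℂ (Set.range (gaborVec U V ξ₀))) : Set H) ∧
  ∀ m n m' n' : ℤ,
    ⟪gaborVec U V ξ₀ (m', n'), gaborVec U V ξ₀ (m, n)⟫_ℂ = K (m, n) (m', n')

/-!
The analysis operator `f ↦ (⟪v x, f⟫)ₓ` of a normalized tight frame is an isometry
`H → ℓ²(X)`, and its adjoint sends the basis vector `eₓ` to `v x`. Hence `∑ ξᵢ • v (xᵢ)` is the
image of `∑ ξᵢ • e (xᵢ)` under a contraction, and the two quadratic forms are the squared norms
of these two vectors, as `K` and `δ` are the Gram kernels of `v` and `e`.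
-/
open scoped lp

section GramForm

variable {𝕜 E X : Type*} [RCLike 𝕜] [NormedAddCommGroup E] [InnerProductSpace 𝕜 E]

theorem inner_sum_smul_self {ι : Type*} (s : Finset ι) (u : ι → E) (ξ : ι → 𝕜) :
    ⟪∑ i ∈ s, ξ i • u i, ∑ i ∈ s, ξ i • u i⟫_𝕜 =
      ∑ i ∈ s, ∑ j ∈ s, ⟪u j, u i⟫_𝕜 * ξ i * (starRingEnd 𝕜) (ξ j) := by
  rw [sum_inner, Finset.sum_comm]
  simp_rw [inner_smul_left, inner_sum, inner_smul_right, Finset.mul_sum]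
  refine Finset.sum_congr rfl fun i _ => Finset.sum_congr rfl fun j _ => ?_
  ring

theorem sum_sum_mul_mul_conj_eq_norm_sq {L : X → X → 𝕜} {w : X → E}
    (hw : ∀ a b, ⟪w b, w a⟫_𝕜 = L a b) (n : ℕ) (x : Fin n → X) (ξ : Fin n → 𝕜) :
    ∑ i, ∑ j, L (x i) (x j) * ξ i * (starRingEnd 𝕜) (ξ j) =
      (‖∑ i, ξ i • w (x i)‖ : 𝕜) ^ 2 := by
  simp_rw [← inner_self_eq_norm_sq_to_K, inner_sum_smul_self, hw]

end GramForm

theorem lp.inner_single_one_single_one {X : Type*} [DecidableEq X] (a b : X) :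
    ⟪(lp.single 2 b 1 : ℓ²(X, ℂ)), lp.single 2 a 1⟫_ℂ = if a = b then 1 else 0 := by
  simp [lp.inner_single_left, Pi.single_apply, eq_comm]

namespace IsNormalizedTightFrame

variable {X H : Type*} [NormedAddCommGroup H] [InnerProductSpace ℂ H] {v : X → H}

theorem summable (hv : IsNormalizedTightFrame v) (f : H) :
    Summable fun x => ‖⟪v x, f⟫_ℂ‖ ^ 2 := by
  by_contra hs
  have hf : f = 0 := by simpa [tsum_eq_zero_of_not_summable hs] using (hv f).symm
  exact hs (by simp [hf])

theorem memℓp (hv : IsNormalizedTightFrame v) (f : H) :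
    Memℓp (fun x => ⟪v x, f⟫_ℂ) 2 :=
  memℓp_gen (by simpa using hv.summable f)

def analysis (hv : IsNormalizedTightFrame v) (f : H) : ℓ²(X, ℂ) :=
  ⟨fun x => ⟪v x, f⟫_ℂ, hv.memℓp f⟩

theorem norm_analysis (hv : IsNormalizedTightFrame v) (f : H) : ‖hv.analysis f‖ = ‖f‖ := by
  have h := lp.norm_rpow_eq_tsum (p := 2) (by norm_num) (hv.analysis f)
  simp only [ENNReal.toReal_ofNat, Real.rpow_two] at h
  rw [← pow_left_inj₀ (norm_nonneg _) (norm_nonneg _) two_ne_zero, h, ← hv f]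
  rfl

theorem inner_sum_single_analysis [DecidableEq X] (hv : IsNormalizedTightFrame v)
    {ι : Type*} (s : Finset ι) (x : ι → X) (c : ι → ℂ) (f : H) :
    ⟪∑ i ∈ s, c i • (lp.single 2 (x i) 1 : ℓ²(X, ℂ)), hv.analysis f⟫_ℂ =
      ⟪∑ i ∈ s, c i • v (x i), f⟫_ℂ := by
  simp_rw [sum_inner, inner_smul_left, lp.inner_single_left]
  simp [analysis]

theorem norm_sum_smul_le [DecidableEq X] (hv : IsNormalizedTightFrame v)
    {ι : Type*} (s : Finset ι) (x : ι → X) (c : ι → ℂ) :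
    ‖∑ i ∈ s, c i • v (x i)‖ ≤ ‖∑ i ∈ s, c i • (lp.single 2 (x i) 1 : ℓ²(X, ℂ))‖ := by
  set f := ∑ i ∈ s, c i • v (x i)
  set g := ∑ i ∈ s, c i • (lp.single 2 (x i) 1 : ℓ²(X, ℂ))
  have h : ‖f‖ ^ 2 ≤ ‖g‖ * ‖f‖ := calc
    ‖f‖ ^ 2 = RCLike.re ⟪f, f⟫_ℂ := (inner_self_eq_norm_sq f).symm
    _ = RCLike.re ⟪g, hv.analysis f⟫_ℂ := by rw [hv.inner_sum_single_analysis]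
    _ ≤ ‖g‖ * ‖hv.analysis f‖ := re_inner_le_norm _ _
    _ = ‖g‖ * ‖f‖ := by rw [hv.norm_analysis]
  nlinarith [norm_nonneg f, norm_nonneg g]

end IsNormalizedTightFrame

theorem ntf_kernel_le_delta_general {X : Type*} (K : X → X → ℂ)
    {H : Type*} [NormedAddCommGroup H] [InnerProductSpace ℂ H]
    (v : X → H) (hrep : IsKolmogorovRep K H v) (hntf : IsNormalizedTightFrame v) :
    ∀ (n : ℕ) (x : Fin n → X) (ξ : Fin n → ℂ),
      ∑ i, ∑ j, K (x i) (x j) * ξ i * (starRingEnd ℂ) (ξ j) ≤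
        ∑ i, ∑ j, (if x i = x j then (1 : ℂ) else 0) * ξ i * (starRingEnd ℂ) (ξ j) := by
  intro n x ξ
  rw [sum_sum_mul_mul_conj_eq_norm_sq hrep.2,
    sum_sum_mul_mul_conj_eq_norm_sq lp.inner_single_one_single_one]
  exact_mod_cast pow_le_pow_left₀ (norm_nonneg _) (hntf.norm_sum_smul_le _ x ξ) 2

/-- An NTF positive definite kernel is dominated by the diagonal kernel `δ`. -/
theorem ntf_kernel_le_delta {X : Type*} [Nonempty X] (K : X → X → ℂ)
    (hK : IsPosDefKernel K)
    {H : Type*} [NormedAddCommGroup H] [InnerProductSpace ℂ H] [CompleteSpace H]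
    (v : X → H) (hrep : IsKolmogorovRep K H v) (hntf : IsNormalizedTightFrame v) :
    ∀ (n : ℕ) (x : Fin n → X) (ξ : Fin n → ℂ),
      ∑ i, ∑ j, K (x i) (x j) * ξ i * (starRingEnd ℂ) (ξ j) ≤
        ∑ i, ∑ j, (if x i = x j then (1 : ℂ) else 0) * ξ i * (starRingEnd ℂ) (ξ j) :=
  ntf_kernel_le_delta_general K v hrep hntf
end
end

section
/- Let X be a countable nonempty set and let K, K' be NTF positive definite maps on X with Kolmogorov representations (H_K, v_K) and (H_{K'}, v_{K'}), and suppose K ≤ cK' for some c > 0. Then there exists an isometry W : H_K → H_{K'} induced by K, i.e., ⟨W v_K(x), v_{K'}(y)⟩ = K(x,y) for all x, y ∈ X; moreover the orthogonal projection P of H_{K'} onto the range of W is also induced by K, i.e., ⟨P v_{K'}(x), v_{K'}(y)⟩ = K(x,y) for all x, y ∈ X, and P v_{K'}(x) = W v_K(x) for all x ∈ X. -/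
open scoped InnerProductSpace ComplexOrder Classical
open Complex

noncomputable section

/-!
The bound `K ≤ c K'` says that `∑ ξ x • v' x ↦ ∑ ξ x • v x` is bounded on the dense span of
the `v' x`, so it extends to an operator `T : H_{K'} → H_K` with `T (v' x) = v x`. Its adjoint
`W = T†` satisfies `⟨v' x, W f⟩ = ⟨v x, f⟩`, so the two tight frame identities give
`‖W f‖² = ∑ |⟨v x, f⟩|² = ‖f‖²`. Finally `W† = T`, so the projection `W W†` onto the range of
the isometry `W` sends `v' x` to `W (v x)`.
-/

open Finsupp ContinuousLinearMap

theorem Finsupp.linearCombination_eq_sum_equivFin {X R M : Type*} [Semiring R]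
    [AddCommMonoid M] [Module R M] (v : X → M) (ξ : X →₀ R) :
    linearCombination R v ξ =
      ∑ i, ξ (ξ.support.equivFin.symm i) • v (ξ.support.equivFin.symm i) := by
  rw [linearCombination_apply, Finsupp.sum, ← Finset.sum_coe_sort,
    ← ξ.support.equivFin.symm.sum_comp]

theorem exists_continuousLinearMap_apply_eq_of_norm_linearCombination_le {ι 𝕜 E F : Type*}
    [NormedField 𝕜] [NormedAddCommGroup E] [NormedSpace 𝕜 E] [NormedAddCommGroup F]
    [NormedSpace 𝕜 F] [CompleteSpace F] {u : ι → E} {w : ι → F}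
    (hu : Dense (Submodule.span 𝕜 (Set.range u) : Set E)) (C : ℝ)
    (hC : ∀ ξ, ‖linearCombination 𝕜 w ξ‖ ≤ C * ‖linearCombination 𝕜 u ξ‖) :
    ∃ T : E →L[𝕜] F, ∀ i, T (u i) = w i := by
  have hdense : DenseRange (linearCombination 𝕜 u) := by
    rwa [DenseRange, ← LinearMap.coe_range, range_linearCombination]
  refine ⟨(linearCombination 𝕜 w).extendOfNorm (linearCombination 𝕜 u), fun i => ?_⟩
  simpa using LinearMap.extendOfNorm_eq hdense ⟨C, hC⟩ (single i 1)

section Kernel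

variable {X H : Type*} [NormedAddCommGroup H] [InnerProductSpace ℂ H]

theorem quadForm_eq_norm_sq {K : X → X → ℂ} {v : X → H} (hv : ∀ x y, ⟪v y, v x⟫_ℂ = K x y)
    {n : ℕ} (x : Fin n → X) (ξ : Fin n → ℂ) :
    ∑ i, ∑ j, K (x i) (x j) * ξ i * (starRingEnd ℂ) (ξ j) =
      ((‖∑ i, ξ i • v (x i)‖ ^ 2 : ℝ) : ℂ) := by
  calc ∑ i, ∑ j, K (x i) (x j) * ξ i * (starRingEnd ℂ) (ξ j)
      = ⟪∑ i, ξ i • v (x i), ∑ i, ξ i • v (x i)⟫_ℂ := by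
        rw [sum_inner, Finset.sum_comm]
        simp only [inner_sum, inner_smul_left, inner_smul_right, hv]
        exact Finset.sum_congr rfl fun _ _ => Finset.sum_congr rfl fun _ _ => by ring
    _ = ((‖∑ i, ξ i • v (x i)‖ ^ 2 : ℝ) : ℂ) := by
        rw [Complex.ofReal_pow]; exact inner_self_eq_norm_sq_to_K _

variable {H' : Type*} [NormedAddCommGroup H'] [InnerProductSpace ℂ H']
  {K K' : X → X → ℂ} {c : ℝ} {v : X → H} {v' : X → H'}

theorem KernelLE.norm_sum_smul_le (hle : KernelLE K K' c) (hv : ∀ x y, ⟪v y, v x⟫_ℂ = K x y)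
    (hv' : ∀ x y, ⟪v' y, v' x⟫_ℂ = K' x y) {n : ℕ} (x : Fin n → X) (ξ : Fin n → ℂ) :
    ‖∑ i, ξ i • v (x i)‖ ≤ √c * ‖∑ i, ξ i • v' (x i)‖ := by
  have hsq := hle n x ξ
  rw [quadForm_eq_norm_sq hv, quadForm_eq_norm_sq hv', ← Complex.ofReal_mul,
    Complex.real_le_real] at hsq
  calc ‖∑ i, ξ i • v (x i)‖ = √(‖∑ i, ξ i • v (x i)‖ ^ 2) := (Real.sqrt_sq (norm_nonneg _)).symm
    _ ≤ √(c * ‖∑ i, ξ i • v' (x i)‖ ^ 2) := Real.sqrt_le_sqrt hsq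
    _ = √c * ‖∑ i, ξ i • v' (x i)‖ := by
      rw [Real.sqrt_mul' _ (by positivity), Real.sqrt_sq (norm_nonneg _)]

theorem KernelLE.norm_linearCombination_le (hle : KernelLE K K' c)
    (hv : ∀ x y, ⟪v y, v x⟫_ℂ = K x y) (hv' : ∀ x y, ⟪v' y, v' x⟫_ℂ = K' x y) (ξ : X →₀ ℂ) :
    ‖linearCombination ℂ v ξ‖ ≤ √c * ‖linearCombination ℂ v' ξ‖ := by
  simpa only [linearCombination_eq_sum_equivFin] using hle.norm_sum_smul_le hv hv' _ _

end Kernel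

theorem IsNormalizedTightFrame.norm_adjoint_apply {X H H' : Type*} [NormedAddCommGroup H]
    [InnerProductSpace ℂ H] [CompleteSpace H] [NormedAddCommGroup H'] [InnerProductSpace ℂ H']
    [CompleteSpace H'] {v : X → H} {v' : X → H'}
    (hv : IsNormalizedTightFrame v) (hv' : IsNormalizedTightFrame v') {T : H' →L[ℂ] H}
    (hT : ∀ x, T (v' x) = v x) (f : H) : ‖adjoint T f‖ = ‖f‖ := by
  have hsq : ‖adjoint T f‖ ^ 2 = ‖f‖ ^ 2 := by
    simp only [← hv' (adjoint T f), ← hv f, adjoint_inner_right, hT]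
  exact (sq_eq_sq₀ (norm_nonneg _) (norm_nonneg _)).mp hsq

theorem IsOrthProjectionOnto.apply_eq_of_forall_inner {H H' : Type*} [NormedAddCommGroup H]
    [InnerProductSpace ℂ H] [NormedAddCommGroup H'] [InnerProductSpace ℂ H']
    {W : H →ₗᵢ[ℂ] H'} {P : H' →L[ℂ] H'} (hP : IsOrthProjectionOnto P (Set.range W))
    {u : H'} {g : H} (hg : ∀ f, ⟪W f, u⟫_ℂ = ⟪f, g⟫_ℂ) : P u = W g := by
  obtain ⟨hidem, hsymm, hrange⟩ := hP
  obtain ⟨g', hg'⟩ : P u ∈ Set.range W := hrange ▸ Set.mem_range_self u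
  have hfix : ∀ f, P (W f) = W f := fun f => by
    obtain ⟨w, hw⟩ : W f ∈ Set.range P := hrange ▸ Set.mem_range_self f
    rw [← hw, hidem]
  suffices g' = g by rw [← hg', this]
  refine ext_inner_left ℂ fun f => ?_
  rw [← hg f, ← W.inner_map_map, hg', ← hsymm, hfix]

theorem ntf_dilation_general {X : Type*} (K K' : X → X → ℂ)
    {H : Type*} [NormedAddCommGroup H] [InnerProductSpace ℂ H] [CompleteSpace H]
    {H' : Type*} [NormedAddCommGroup H'] [InnerProductSpace ℂ H'] [CompleteSpace H']
    (v : X → H) (v' : X → H')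
    (hrep : IsKolmogorovRep K H v) (hrep' : IsKolmogorovRep K' H' v')
    (hntf : IsNormalizedTightFrame v) (hntf' : IsNormalizedTightFrame v')
    (c : ℝ) (hle : KernelLE K K' c) :
    ∃ W : H →ₗᵢ[ℂ] H',
      (∀ x y : X, ⟪v' y, W (v x)⟫_ℂ = K x y) ∧
      ∀ P : H' →L[ℂ] H', IsOrthProjectionOnto P (Set.range W) →
        (∀ x y : X, ⟪v' y, P (v' x)⟫_ℂ = K x y) ∧ ∀ x : X, P (v' x) = W (v x) := by
  obtain ⟨T, hT⟩ := exists_continuousLinearMap_apply_eq_of_norm_linearCombination_le hrep'.1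
    √c (hle.norm_linearCombination_le hrep.2 hrep'.2)
  let W : H →ₗᵢ[ℂ] H' := ⟨(adjoint T).toLinearMap, hntf.norm_adjoint_apply hntf' hT⟩
  have hW : ∀ x y, ⟪v' y, W (v x)⟫_ℂ = K x y := fun x y => by
    rw [← hrep.2, ← hT y]
    exact adjoint_inner_right T (v' y) (v x)
  have hPW : ∀ P : H' →L[ℂ] H', IsOrthProjectionOnto P (Set.range W) →
      ∀ x, P (v' x) = W (v x) := fun P hP x =>
    hP.apply_eq_of_forall_inner fun f => by rw [← hT]; exact adjoint_inner_left T (v' x) f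
  exact ⟨W, hW, fun P hP => ⟨fun x y => by rw [hPW P hP]; exact hW x y, hPW P hP⟩⟩

/-- If `K, K'` are NTF positive definite kernels on a countable set with `K ≤ c K'`, then
there is an isometry `W : H_K → H_{K'}` induced by `K`, and the orthogonal projection onto
its range is also induced by `K`. -/
theorem ntf_dilation {X : Type*} [Nonempty X] [Countable X] (K K' : X → X → ℂ)
    (hK : IsPosDefKernel K) (hK' : IsPosDefKernel K')
    {H : Type*} [NormedAddCommGroup H] [InnerProductSpace ℂ H] [CompleteSpace H]
    {H' : Type*} [NormedAddCommGroup H'] [InnerProductSpace ℂ H'] [CompleteSpace H']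
    (v : X → H) (v' : X → H')
    (hrep : IsKolmogorovRep K H v) (hrep' : IsKolmogorovRep K' H' v')
    (hntf : IsNormalizedTightFrame v) (hntf' : IsNormalizedTightFrame v')
    (c : ℝ) (hc : 0 < c) (hle : KernelLE K K' c) :
    ∃ W : H →ₗᵢ[ℂ] H',
      (∀ x y : X, ⟪v' y, W (v x)⟫_ℂ = K x y) ∧
      ∀ P : H' →L[ℂ] H', IsOrthProjectionOnto P (Set.range W) →
        (∀ x y : X, ⟪v' y, P (v' x)⟫_ℂ = K x y) ∧ ∀ x : X, P (v' x) = W (v x) :=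
  ntf_dilation_general K K' v v' hrep hrep' hntf hntf' c hle
end
end

section
/- Dilation of group frames: Let G be a countable group, let π be a unitary representation of G on a complex Hilbert space H, and let η ∈ H be such that {π(g)η : g ∈ G} is a normalized tight frame for H. Then there exist a complex Hilbert space H₁, an isometric linear embedding W : H → H₁, a unitary representation π₁ of G on H₁, and a vector ξ ∈ H₁ such that: (i) {π₁(g)ξ : g ∈ G} is an orthonormal basis of H₁; (ii) W π(g) = π₁(g) W for all g ∈ G; (iii) the orthogonal projection P of H₁ onto the range of W commutes with π₁(g) for all g ∈ G; (iv) P ξ = W η. In particular, P π₁(g) ξ = W π(g) η for all g ∈ G, so the normalized tight frame {π(g)η} dilates to the orthonormal basis {π₁(g)ξ}. -/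
/-! The analysis operator `f ↦ (⟪π g η, f⟫)_g` is an isometry `W : H → ℓ²(G)` by the tight-frame
identity, and it intertwines `π` with the left regular representation `λ`. So the range of `W` is
`λ`-invariant and the orthogonal projection onto it commutes with `λ`. Moreover
`⟪δ_g, W f⟫ = ⟪π g η, f⟫ = ⟪W (π g η), W f⟫`, so `δ_g - W (π g η)` is orthogonal to the range:
the projection of the basis vector `δ_g = λ g δ_1` is `W (π g η)`. -/

open scoped InnerProductSpace ComplexOrder Classical
open Complex

noncomputable section

universe u

open scoped ENNReal lp

section CompEquiv

variable {ι κ E : Type*} [NormedAddCommGroup E] {p : ℝ≥0∞}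

theorem Memℓp.comp_equiv {f : ι → E} (hf : Memℓp f p) (e : κ ≃ ι) : Memℓp (f ∘ e) p := by
  rcases p.trichotomy with rfl | rfl | hp
  · exact memℓp_zero_iff.2 ((memℓp_zero_iff.1 hf).preimage e.injective.injOn)
  · rw [memℓp_infty_iff] at hf ⊢
    rwa [← e.surjective.range_comp (‖f ·‖)] at hf
  · exact memℓp_gen ((e.summable_iff (f := (‖f ·‖ ^ p.toReal))).2 ((memℓp_gen_iff hp).1 hf))

variable (𝕜 : Type*) [NormedField 𝕜] [NormedSpace 𝕜 E]

def lp.compLinearMap (e : κ ≃ ι) : lp (fun _ : ι => E) p →ₗ[𝕜] lp (fun _ : κ => E) p where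
  toFun f := ⟨f ∘ e, (lp.memℓp f).comp_equiv e⟩
  map_add' _ _ := rfl
  map_smul' _ _ := rfl

variable [Fact (1 ≤ p)]

theorem lp.norm_compLinearMap (hp : p ≠ ∞) (e : κ ≃ ι) (f : lp (fun _ : ι => E) p) :
    ‖lp.compLinearMap 𝕜 e f‖ = ‖f‖ := by
  have hp' : 0 < p.toReal := ENNReal.toReal_pos (zero_lt_one.trans_le Fact.out).ne' hp
  refine Real.rpow_left_injOn hp'.ne' (norm_nonneg _) (norm_nonneg _) ?_
  change ‖lp.compLinearMap 𝕜 e f‖ ^ p.toReal = ‖f‖ ^ p.toReal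
  rw [lp.norm_rpow_eq_tsum hp', lp.norm_rpow_eq_tsum hp']
  exact e.tsum_eq (‖f ·‖ ^ p.toReal)

def lp.compEquiv (hp : p ≠ ∞) (e : κ ≃ ι) :
    lp (fun _ : ι => E) p ≃ₗᵢ[𝕜] lp (fun _ : κ => E) p where
  toLinearEquiv :=
    { lp.compLinearMap 𝕜 e with
      invFun := lp.compLinearMap 𝕜 e.symm
      left_inv f := by ext i; exact congrArg f (e.apply_symm_apply i)
      right_inv f := by ext k; exact congrArg f (e.symm_apply_apply k) }
  norm_map' := lp.norm_compLinearMap 𝕜 hp e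

@[simp]
theorem lp.compEquiv_apply (hp : p ≠ ∞) (e : κ ≃ ι) (f : lp (fun _ : ι => E) p) (k : κ) :
    lp.compEquiv 𝕜 hp e f k = f (e k) :=
  rfl

end CompEquiv

section LeftRegular

variable (𝕜 E : Type*) [NormedField 𝕜] [NormedAddCommGroup E] [NormedSpace 𝕜 E]

def lp.leftRegular (p : ℝ≥0∞) [Fact (1 ≤ p)] (G : Type*) [Group G] (hp : p ≠ ∞ := by norm_num) :
    G →* (lp (fun _ : G => E) p ≃ₗᵢ[𝕜] lp (fun _ : G => E) p) where
  toFun g := lp.compEquiv 𝕜 hp (Equiv.mulLeft g⁻¹)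
  map_one' := by ext; simp
  map_mul' g g' := by ext; simp

variable {𝕜 E} {p : ℝ≥0∞} [Fact (1 ≤ p)] {G : Type*} [Group G]

@[simp]
theorem lp.leftRegular_apply (hp : p ≠ ∞) (g : G) (f : lp (fun _ : G => E) p) (i : G) :
    lp.leftRegular 𝕜 E p G hp g f i = f (g⁻¹ * i) :=
  rfl

theorem lp.leftRegular_single (hp : p ≠ ∞) (g i : G) (x : E) :
    lp.leftRegular 𝕜 E p G hp g (lp.single p i x) = lp.single p (g * i) x := by
  ext j
  simp [lp.single_apply, Pi.single_apply, inv_mul_eq_iff_eq_mul]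

end LeftRegular

theorem Submodule.starProjection_apply_linearIsometryEquiv {𝕜 E : Type*} [RCLike 𝕜]
    [NormedAddCommGroup E] [InnerProductSpace 𝕜 E] {K : Submodule 𝕜 E} [K.HasOrthogonalProjection]
    (U : E ≃ₗᵢ[𝕜] E) (hU : K.map (U.toLinearEquiv : E →ₗ[𝕜] E) = K) (x : E) :
    K.starProjection (U x) = U (K.starProjection x) := by
  simpa only [hU, LinearIsometryEquiv.symm_apply_apply] using K.starProjection_map_apply U (U x)

theorem LinearMap.map_range_eq_of_intertwines {R M N : Type*} [Semiring R] [AddCommMonoid M]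
    [AddCommMonoid N] [Module R M] [Module R N] (W : M →ₗ[R] N) (A : M ≃ₗ[R] M) (B : N ≃ₗ[R] N)
    (h : ∀ x, W (A x) = B (W x)) : (LinearMap.range W).map (B : N →ₗ[R] N) = LinearMap.range W := by
  have hcomm : (B : N →ₗ[R] N) ∘ₗ W = W ∘ₗ A := LinearMap.ext fun x => (h x).symm
  rw [← LinearMap.range_comp, hcomm, LinearMap.range_comp_of_range_eq_top _ A.range]

section Projection

variable {E : Type*} [NormedAddCommGroup E] [InnerProductSpace ℂ E] {P : E →L[ℂ] E}
  {K : Submodule ℂ E}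

theorem IsOrthProjectionOnto.apply_mem (hP : IsOrthProjectionOnto P K) (v : E) : P v ∈ K := by
  rw [← SetLike.mem_coe, ← hP.2.2]
  exact Set.mem_range_self v

theorem IsOrthProjectionOnto.sub_apply_mem_orthogonal (hP : IsOrthProjectionOnto P K) (v : E) :
    v - P v ∈ Kᗮ := by
  obtain ⟨hidem, hsymm, hrange⟩ := hP
  refine (K.mem_orthogonal _).2 fun w hw => ?_
  obtain ⟨u, rfl⟩ : w ∈ Set.range P := hrange ▸ hw
  rw [hsymm, map_sub, hidem, sub_self, inner_zero_right]

theorem IsOrthProjectionOnto.hasOrthogonalProjection (hP : IsOrthProjectionOnto P K) :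
    K.HasOrthogonalProjection :=
  ⟨fun v => ⟨P v, hP.apply_mem v, hP.sub_apply_mem_orthogonal v⟩⟩

theorem IsOrthProjectionOnto.apply_eq_starProjection [K.HasOrthogonalProjection]
    (hP : IsOrthProjectionOnto P K) (v : E) : P v = K.starProjection v :=
  (K.eq_starProjection_of_mem_orthogonal (hP.apply_mem v) (hP.sub_apply_mem_orthogonal v)).symm

end Projection

section AnalysisOperator

variable {H : Type*} [NormedAddCommGroup H] [InnerProductSpace ℂ H] {ι : Type*} {v : ι → H}

theorem IsNormalizedTightFrame.summable_s18 (hv : IsNormalizedTightFrame v) (f : H) :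
    Summable fun i => ‖⟪v i, f⟫_ℂ‖ ^ 2 := by
  by_contra hs
  have hf : f = 0 := by simpa [tsum_eq_zero_of_not_summable hs, eq_comm] using hv f
  exact hs (by simp [hf])

theorem IsNormalizedTightFrame.memℓp_s18 (hv : IsNormalizedTightFrame v) (f : H) :
    Memℓp (fun i => ⟪v i, f⟫_ℂ) 2 :=
  memℓp_gen (by simpa using hv.summable_s18 f)

def IsNormalizedTightFrame.analysis_s18 (hv : IsNormalizedTightFrame v) : H →ₗᵢ[ℂ] ℓ²(ι, ℂ) where
  toFun f := ⟨fun i => ⟪v i, f⟫_ℂ, hv.memℓp_s18 f⟩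
  map_add' f g := by ext i; exact inner_add_right _ _ _
  map_smul' c f := by ext i; exact inner_smul_right _ _ _
  norm_map' f := by
    refine (sq_eq_sq₀ (norm_nonneg _) (norm_nonneg _)).1 ?_
    rw [← hv f, ← Real.rpow_two, ← ENNReal.toReal_ofNat, lp.norm_rpow_eq_tsum (by norm_num)]
    simp

@[simp]
theorem IsNormalizedTightFrame.analysis_apply (hv : IsNormalizedTightFrame v) (f : H) (i : ι) :
    hv.analysis_s18 f i = ⟪v i, f⟫_ℂ :=
  rfl

theorem IsNormalizedTightFrame.inner_single_analysis (hv : IsNormalizedTightFrame v) (i : ι)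
    (f : H) : ⟪lp.single 2 i (1 : ℂ), hv.analysis_s18 f⟫_ℂ = ⟪v i, f⟫_ℂ := by
  simp [lp.inner_single_left]

theorem IsNormalizedTightFrame.starProjection_single (hv : IsNormalizedTightFrame v)
    [(LinearMap.range hv.analysis_s18.toLinearMap).HasOrthogonalProjection] (i : ι) :
    (LinearMap.range hv.analysis_s18.toLinearMap).starProjection (lp.single 2 i 1) =
      hv.analysis_s18 (v i) := by
  refine Submodule.eq_starProjection_of_mem_of_inner_eq_zero ⟨v i, rfl⟩ ?_
  rintro _ ⟨f, rfl⟩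
  rw [inner_sub_left]
  exact sub_eq_zero.2 ((hv.inner_single_analysis i f).trans (hv.analysis_s18.inner_map_map _ _).symm)

end AnalysisOperator

theorem IsNormalizedTightFrame.analysis_orbit_equivariant {H : Type*} [NormedAddCommGroup H]
    [InnerProductSpace ℂ H] {G : Type*} [Group G] (π : G →* (H ≃ₗᵢ[ℂ] H)) {η : H}
    (hframe : IsNormalizedTightFrame fun g : G => π g η) (g : G) (x : H) :
    hframe.analysis_s18 (π g x) = (lp.leftRegular ℂ ℂ 2 G) g (hframe.analysis_s18 x) := by
  ext h
  have hh : π h η = π g (π (g⁻¹ * h) η) := by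
    change π h η = (π g * π (g⁻¹ * h)) η
    rw [← map_mul, mul_inv_cancel_left]
  rw [hframe.analysis_apply, lp.leftRegular_apply, hframe.analysis_apply, hh,
    (π g).inner_map_map]

theorem group_frame_dilation_general {G : Type u} [Group G]
    {H : Type u} [NormedAddCommGroup H] [InnerProductSpace ℂ H]
    (π : G →* (H ≃ₗᵢ[ℂ] H)) (η : H)
    (hframe : IsNormalizedTightFrame fun g : G => π g η) :
    ∃ (H₁ : Type u) (_ : NormedAddCommGroup H₁) (_ : InnerProductSpace ℂ H₁)
      (_ : CompleteSpace H₁) (W : H →ₗᵢ[ℂ] H₁) (π₁ : G →* (H₁ ≃ₗᵢ[ℂ] H₁)) (ξ : H₁),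
      (Orthonormal ℂ (fun g : G => π₁ g ξ) ∧
        Dense (↑(Submodule.span ℂ (Set.range fun g : G => π₁ g ξ)) : Set H₁)) ∧
      (∀ (g : G) (x : H), W (π g x) = π₁ g (W x)) ∧
      (∀ P : H₁ →L[ℂ] H₁, IsOrthProjectionOnto P (Set.range W) →
        (∀ (g : G) (w : H₁), P (π₁ g w) = π₁ g (P w)) ∧
        P ξ = W η ∧
        ∀ g : G, P (π₁ g ξ) = W (π g η)) := by
  set ρ := lp.leftRegular ℂ ℂ 2 G
  have hρ (g : G) : ρ g (lp.single 2 1 1) = lp.single 2 g 1 := by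
    rw [lp.leftRegular_single, mul_one]
  let b : HilbertBasis G ℂ ℓ²(G, ℂ) := .ofRepr (.refl ℂ _)
  have hb : ⇑b = fun g => ρ g (lp.single 2 1 1) := funext fun g => (hρ g).symm
  refine ⟨ℓ²(G, ℂ), inferInstance, inferInstance, inferInstance, hframe.analysis_s18, ρ,
    lp.single 2 1 1,
    ⟨hb ▸ b.orthonormal, Submodule.dense_iff_topologicalClosure_eq_top.2 (hb ▸ b.dense_span)⟩,
    hframe.analysis_orbit_equivariant π, fun P hP => ?_⟩
  set K := LinearMap.range hframe.analysis_s18.toLinearMap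
  have hPK : IsOrthProjectionOnto P K := hP
  have := hPK.hasOrthogonalProjection
  have hproj (g : G) : P (ρ g (lp.single 2 1 1)) = hframe.analysis_s18 (π g η) := by
    rw [hPK.apply_eq_starProjection, hρ, hframe.starProjection_single]
  refine ⟨fun g w => ?_, by simpa using hproj 1, hproj⟩
  rw [hPK.apply_eq_starProjection, hPK.apply_eq_starProjection,
    K.starProjection_apply_linearIsometryEquiv _ (LinearMap.map_range_eq_of_intertwines _
      (π g).toLinearEquiv _ (hframe.analysis_orbit_equivariant π g))]

/-- **Dilation of group frames.** A normalized tight frame generated by a unitary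
representation of a countable group dilates to an orthonormal basis generated by a unitary
representation of the same group. -/
theorem group_frame_dilation {G : Type u} [Group G] [Countable G]
    {H : Type u} [NormedAddCommGroup H] [InnerProductSpace ℂ H] [CompleteSpace H]
    (π : G →* (H ≃ₗᵢ[ℂ] H)) (η : H)
    (hframe : IsNormalizedTightFrame fun g : G => π g η) :
    ∃ (H₁ : Type u) (_ : NormedAddCommGroup H₁) (_ : InnerProductSpace ℂ H₁)
      (_ : CompleteSpace H₁) (W : H →ₗᵢ[ℂ] H₁) (π₁ : G →* (H₁ ≃ₗᵢ[ℂ] H₁)) (ξ : H₁),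
      (Orthonormal ℂ (fun g : G => π₁ g ξ) ∧
        Dense (↑(Submodule.span ℂ (Set.range fun g : G => π₁ g ξ)) : Set H₁)) ∧
      (∀ (g : G) (x : H), W (π g x) = π₁ g (W x)) ∧
      (∀ P : H₁ →L[ℂ] H₁, IsOrthProjectionOnto P (Set.range W) →
        (∀ (g : G) (w : H₁), P (π₁ g w) = π₁ g (P w)) ∧
        P ξ = W η ∧
        ∀ g : G, P (π₁ g ξ) = W (π g η)) :=
  group_frame_dilation_general π η hframe
end
end
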